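/- arXiv:1811.05802 — 6 statements merged into one kernel-verified Lean document; each statement's English description precedes it below -/
import Mathlib

section
/- With P_n defined as the weak operator limit of K(σ_m^n) as m → ∞ (where σ_m^n = (n+1, n+m+1)···(n+m, n+2m)), the operator P_n satisfies P_n² = P_n; combined with self-adjointness, P_n is an orthogonal projection. -/
open MeasureTheory Filter Topology
open scoped InnerProductSpace

/-- The pointwise stabilizer `S(n,∞)` of the first `n` natural numbers inside the full
symmetric group of `ℕ` (all bijections of `ℕ`). -/
def stabSet (n : ℕ) : Set (Equiv.Perm ℕ) := {s | ∀ i < n, s i = i}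

/-- `σ_m^n`, the product of the disjoint transpositions `(n+j, n+m+j)` for `j = 0,…,m-1`. -/
def sigmaPerm (n m : ℕ) : Equiv.Perm ℕ :=
  ((List.range m).map fun j => Equiv.swap (n + j) (n + m + j)).prod

/-!
For fixed `m` and `m' ≥ 2m`, conjugating `σ_m^n` by `σ_{m'}^n` gives a permutation fixing
`0, …, n + m' - 1`, so by continuity `K(σ_m^n σ_{m'}^n) η - K(σ_{m'}^n) η → 0` as `m' → ∞`.
Passing to weak limits gives `K(σ_m^n) (P η) = P η` weakly for every `m`, and letting `m → ∞`
yields `P (P η) = P η`.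
-/

lemma List.prod_apply_eq_self_of_forall {α : Type*} {l : List (Equiv.Perm α)} {x : α}
    (h : ∀ s ∈ l, s x = x) : l.prod x = x := by
  induction l with
  | nil => rfl
  | cons a t ih =>
    rw [List.prod_cons, Equiv.Perm.mul_apply, ih fun s hs => h s (List.mem_cons_of_mem a hs),
      h a List.mem_cons_self]

/-- `sigmaPerm n m` is definitionally `blockSwap n (n + m) m`; freeing the second start point
makes induction on `m` possible. -/
def blockSwap (a b m : ℕ) : Equiv.Perm ℕ :=
  ((List.range m).map fun j => Equiv.swap (a + j) (b + j)).prod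

lemma blockSwap_succ (a b m : ℕ) :
    blockSwap a b (m + 1) = blockSwap a b m * Equiv.swap (a + m) (b + m) := by
  simp [blockSwap, List.range_succ]

lemma blockSwap_apply_of_forall_ne {a b m x : ℕ} (h : ∀ k < m, x ≠ a + k ∧ x ≠ b + k) :
    blockSwap a b m x = x := by
  refine List.prod_apply_eq_self_of_forall fun s hs => ?_
  obtain ⟨k, hk, rfl⟩ := List.mem_map.1 hs
  have hk := List.mem_range.1 hk
  exact Equiv.swap_apply_of_ne_of_ne (h k hk).1 (h k hk).2

lemma blockSwap_apply_add {a b m j : ℕ} (hab : a + m ≤ b) (hj : j < m) :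
    blockSwap a b m (a + j) = b + j := by
  induction m with
  | zero => omega
  | succ m ih =>
    rw [blockSwap_succ, Equiv.Perm.mul_apply]
    rcases Nat.lt_or_ge j m with hjm | hjm
    · rw [Equiv.swap_apply_of_ne_of_ne (by omega) (by omega), ih (by omega) hjm]
    · obtain rfl : j = m := by omega
      rw [Equiv.swap_apply_left]
      exact blockSwap_apply_of_forall_ne fun k hk => ⟨by omega, by omega⟩

lemma sigmaPerm_apply_of_lt {n m x : ℕ} (hx : x < n) : sigmaPerm n m x = x :=
  blockSwap_apply_of_forall_ne fun _ _ => ⟨by omega, by omega⟩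

lemma sigmaPerm_apply_of_le {n m x : ℕ} (hx : n + 2 * m ≤ x) : sigmaPerm n m x = x :=
  blockSwap_apply_of_forall_ne fun _ _ => ⟨by omega, by omega⟩

lemma sigmaPerm_apply_add {n m j : ℕ} (hj : j < m) : sigmaPerm n m (n + j) = n + m + j :=
  blockSwap_apply_add le_rfl hj

lemma sigmaPerm_conj_mem_stabSet {n m m' : ℕ} (h : 2 * m ≤ m') :
    (sigmaPerm n m')⁻¹ * sigmaPerm n m * sigmaPerm n m' ∈ stabSet (n + m') := by
  intro i hi
  suffices sigmaPerm n m (sigmaPerm n m' i) = sigmaPerm n m' i by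
    rw [Equiv.Perm.mul_apply, Equiv.Perm.mul_apply, this, Equiv.Perm.inv_def,
      Equiv.symm_apply_apply]
  rcases Nat.lt_or_ge i n with hin | hni
  · rw [sigmaPerm_apply_of_lt hin, sigmaPerm_apply_of_lt hin]
  · obtain ⟨j, rfl⟩ := Nat.exists_eq_add_of_le hni
    rw [sigmaPerm_apply_add (by omega)]
    exact sigmaPerm_apply_of_le (by omega)

section Representation

variable {𝕜 H G : Type*} [RCLike 𝕜] [NormedAddCommGroup H] [InnerProductSpace 𝕜 H] [Group G]

lemma map_mul_apply (K : G →* (H →L[𝕜] H)) (g h : G) (x : H) : K (g * h) x = K g (K h x) := by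
  rw [map_mul, mul_apply_eq_comp]

lemma inner_map_apply_left (K : G →* (H →L[𝕜] H)) (hunit : ∀ g (η : H), ‖K g η‖ = ‖η‖)
    (g : G) (a b : H) : ⟪K g a, b⟫_𝕜 = ⟪a, K g⁻¹ b⟫_𝕜 := by
  conv_lhs => rw [← one_apply_eq_self (F := H →L[𝕜] H) b, ← map_one K, ← mul_inv_cancel g,
    map_mul_apply]
  exact (⟨K g, hunit g⟩ : H →ₗᵢ[𝕜] H).inner_map_map a (K g⁻¹ b)

lemma tendsto_map_apply_of_mem_stabSet (K : Equiv.Perm ℕ →* (H →L[𝕜] H))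
    (hcont : ∀ (η : H) (ε : ℝ), 0 < ε → ∃ k : ℕ, ∀ s ∈ stabSet k, ‖K s η - η‖ < ε)
    {s : ℕ → Equiv.Perm ℕ} {k : ℕ → ℕ} (hk : Tendsto k atTop atTop)
    (hs : ∀ᶠ m in atTop, s m ∈ stabSet (k m)) (η : H) :
    Tendsto (fun m => K (s m) η) atTop (𝓝 η) := by
  rw [tendsto_iff_norm_sub_tendsto_zero, Metric.tendsto_nhds]
  intro ε hε
  obtain ⟨k₀, hk₀⟩ := hcont η ε hε
  filter_upwards [tendsto_atTop.1 hk k₀, hs] with m hm hsm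
  rw [Real.dist_0_eq_abs, abs_norm]
  exact hk₀ _ fun i hi => hsm i (by omega)

end Representation

lemma comp_self_eq_of_tendsto_inner {𝕜 H : Type*} [RCLike 𝕜] [NormedAddCommGroup H]
    [InnerProductSpace 𝕜 H] {U V : ℕ → H →L[𝕜] H} {P : H →L[𝕜] H}
    (hadj : ∀ m a b, ⟪U m a, b⟫_𝕜 = ⟪a, V m b⟫_𝕜)
    (hP : ∀ η ζ : H, Tendsto (fun m => ⟪U m η, ζ⟫_𝕜) atTop (𝓝 ⟪P η, ζ⟫_𝕜))
    (habsorb : ∀ m η, Tendsto (fun m' => U m (U m' η) - U m' η) atTop (𝓝 0)) :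
    P.comp P = P := by
  refine ContinuousLinearMap.ext fun η => ext_inner_right 𝕜 fun ζ => ?_
  have hfixed : ∀ m, ⟪U m (P η), ζ⟫_𝕜 = ⟪P η, ζ⟫_𝕜 := by
    intro m
    have hlim₁ : Tendsto (fun m' => ⟪U m (U m' η), ζ⟫_𝕜) atTop (𝓝 ⟪U m (P η), ζ⟫_𝕜) := by
      simpa only [hadj] using hP η (V m ζ)
    have hlim₂ : Tendsto (fun m' => ⟪U m (U m' η), ζ⟫_𝕜) atTop (𝓝 ⟪P η, ζ⟫_𝕜) := by
      have hdiff := (habsorb m η).inner (𝕜 := 𝕜) (tendsto_const_nhds (x := ζ))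
      simpa only [inner_sub_left, inner_zero_left, sub_add_cancel, zero_add]
        using hdiff.add (hP η ζ)
    exact tendsto_nhds_unique hlim₁ hlim₂
  have hPP := hP (P η) ζ
  simp only [hfixed] at hPP
  exact tendsto_nhds_unique hPP tendsto_const_nhds

theorem statement2_general
    {H : Type*} [NormedAddCommGroup H] [InnerProductSpace ℂ H]
    (K : Equiv.Perm ℕ →* (H →L[ℂ] H))
    (hunit : ∀ g (η : H), ‖K g η‖ = ‖η‖)
    (hcont : ∀ (η : H) (ε : ℝ), 0 < ε → ∃ k : ℕ, ∀ s ∈ stabSet k, ‖K s η - η‖ < ε)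
    (n : ℕ) (P : H →L[ℂ] H)
    (hP : ∀ η ζ : H, Tendsto (fun m => ⟪K (sigmaPerm n m) η, ζ⟫_ℂ) atTop (𝓝 ⟪P η, ζ⟫_ℂ)) :
    P.comp P = P := by
  refine comp_self_eq_of_tendsto_inner (V := fun m => K (sigmaPerm n m)⁻¹)
    (fun m => inner_map_apply_left K hunit _) hP fun m η => ?_
  set τ := fun m' => (sigmaPerm n m')⁻¹ * sigmaPerm n m * sigmaPerm n m'
  have hτ : Tendsto (fun m' => K (τ m') η) atTop (𝓝 η) :=
    tendsto_map_apply_of_mem_stabSet K hcont (tendsto_atTop_mono (Nat.le_add_left · n) tendsto_id)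
      ((eventually_ge_atTop (2 * m)).mono fun _ => sigmaPerm_conj_mem_stabSet) η
  have hdist : ∀ m', ‖K (sigmaPerm n m) (K (sigmaPerm n m') η) - K (sigmaPerm n m') η‖
      = ‖K (τ m') η - η‖ := by
    intro m'
    have hconj : sigmaPerm n m' * τ m' = sigmaPerm n m * sigmaPerm n m' := by
      simp only [τ]; group
    rw [← map_mul_apply, ← hconj, map_mul_apply, ← map_sub, hunit]
  rw [tendsto_zero_iff_norm_tendsto_zero]
  simpa only [hdist, ← tendsto_iff_norm_sub_tendsto_zero] using hτ

/-- the weak operator limit `P_n` of `K(σ_m^n)` satisfies `P_n² = P_n`;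
together with self-adjointness it is an orthogonal projection. -/
theorem statement2
    {H : Type*} [NormedAddCommGroup H] [InnerProductSpace ℂ H] [CompleteSpace H]
    (K : Equiv.Perm ℕ →* (H →L[ℂ] H))
    (hunit : ∀ g (η : H), ‖K g η‖ = ‖η‖)
    (hcont : ∀ (η : H) (ε : ℝ), 0 < ε → ∃ k : ℕ, ∀ s ∈ stabSet k, ‖K s η - η‖ < ε)
    (n : ℕ) (P : H →L[ℂ] H) (hsa : IsSelfAdjoint P)
    (hP : ∀ η ζ : H, Tendsto (fun m => ⟪K (sigmaPerm n m) η, ζ⟫_ℂ) atTop (𝓝 ⟪P η, ζ⟫_ℂ)) :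
    P.comp P = P :=
  statement2_general K hunit hcont n P hP
end

section
/- The range of the projection P_n equals the subspace of vectors fixed by K(s) for all s in S(n,∞): P_n H = {η ∈ H : K(s)η = η for all s ∈ S(n,∞)}. -/
open MeasureTheory Filter Topology
open scoped InnerProductSpace

theorem sigmaPerm_mem_stabSet (n m : ℕ) : sigmaPerm n m ∈ stabSet n := by
  intro i hi
  have hswap : ∀ j, Equiv.swap (n + j) (n + m + j) ∈ MulAction.stabilizer (Equiv.Perm ℕ) i :=
    fun j => Equiv.swap_apply_of_ne_of_ne (by omega) (by omega)
  show sigmaPerm n m ∈ MulAction.stabilizer (Equiv.Perm ℕ) i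
  exact list_prod_mem (List.forall_mem_map.2 fun j _ => hswap j)

theorem apply_eq_self_of_tendsto_inner {𝕜 H ι : Type*} [RCLike 𝕜] [NormedAddCommGroup H]
    [InnerProductSpace 𝕜 H] {l : Filter ι} [l.NeBot] {T : ι → H → H} {P : H → H} {η : H}
    (hT : ∀ ζ, Tendsto (fun i => ⟪T i η, ζ⟫_𝕜) l (𝓝 ⟪P η, ζ⟫_𝕜)) (hη : ∀ i, T i η = η) :
    P η = η :=
  ext_inner_right 𝕜 fun ζ =>
    tendsto_nhds_unique (hT ζ) (by simpa only [hη] using tendsto_const_nhds)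

theorem statement4_general
    {H : Type*} [NormedAddCommGroup H] [InnerProductSpace ℂ H]
    (K : Equiv.Perm ℕ →* (H →L[ℂ] H))
    (n : ℕ) (P : H →L[ℂ] H)
    (hP : ∀ η ζ : H, Tendsto (fun m => ⟪K (sigmaPerm n m) η, ζ⟫_ℂ) atTop (𝓝 ⟪P η, ζ⟫_ℂ))
    (hfix : ∀ s ∈ stabSet n, (K s).comp P = P) :
    Set.range P = {η : H | ∀ s ∈ stabSet n, K s η = η} := by
  ext η
  constructor
  · rintro ⟨ζ, rfl⟩ s hs
    exact DFunLike.congr_fun (hfix s hs) ζ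
  · intro hη
    exact ⟨η, apply_eq_self_of_tendsto_inner (hP η) fun m => hη _ (sigmaPerm_mem_stabSet n m)⟩

/-- the range of the projection `P_n` is exactly the subspace of vectors
fixed by `K(s)` for every `s ∈ S(n,∞)`. -/
theorem statement4
    {H : Type*} [NormedAddCommGroup H] [InnerProductSpace ℂ H] [CompleteSpace H]
    (K : Equiv.Perm ℕ →* (H →L[ℂ] H))
    (hunit : ∀ g (η : H), ‖K g η‖ = ‖η‖)
    (hcont : ∀ (η : H) (ε : ℝ), 0 < ε → ∃ k : ℕ, ∀ s ∈ stabSet k, ‖K s η - η‖ < ε)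
    (n : ℕ) (P : H →L[ℂ] H) (hsa : IsSelfAdjoint P) (hidem : P.comp P = P)
    (hP : ∀ η ζ : H, Tendsto (fun m => ⟪K (sigmaPerm n m) η, ζ⟫_ℂ) atTop (𝓝 ⟪P η, ζ⟫_ℂ))
    (hfix : ∀ s ∈ stabSet n, (K s).comp P = P) :
    Set.range P = {η : H | ∀ s ∈ stabSet n, K s η = η} :=
  statement4_general K n P hP hfix
end

section
/- For each fixed k, the sequence of operators K((k, N)) (images of the transpositions swapping k and N) converges in the weak operator topology, as N → ∞, to a self-adjoint orthogonal projection O_k. -/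
open MeasureTheory Filter Topology
open scoped InnerProductSpace

/-!
By continuity of `K`, the transposition `K((M N))` moves any fixed vector arbitrarily little once
`M` and `N` are large. Since `(k M) = (M N)(k N)(M N)`, the coefficients `⟪K((k N)) η, ζ⟫` are
therefore Cauchy, and as they are uniformly bounded their limits are the coefficients of an
operator `O`, self-adjoint as a weak limit of self-adjoint involutions. For idempotence,
`(k N)(k M) = (k M)(N M)` gives `⟪K((k M)) η, K((k N)) ζ⟫ ≈ ⟪K((k M)) η, ζ⟫` for `M ≫ N ≫ 0`;
letting first `M` and then `N` go to infinity yields `⟪O (O η), ζ⟫ = ⟪O η, ζ⟫`.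
-/

theorem tendsto_of_tendsto_curry {α β X : Type*} [TopologicalSpace X] [RegularSpace X]
    {la : Filter α} {lb : Filter β} [lb.NeBot] {f : α × β → X} {g : α → X} {x : X}
    (h : Tendsto f (la.curry lb) (𝓝 x)) (hg : ∀ a, Tendsto (fun b => f (a, b)) lb (𝓝 (g a))) :
    Tendsto g la (𝓝 x) := by
  rw [(closed_nhds_basis x).tendsto_right_iff]
  rintro V ⟨hV, hVc⟩
  filter_upwards [eventually_curry_iff.mp (h.eventually_mem hV)] with a ha
  exact hVc.mem_of_tendsto (hg a) ha

section WeakLimit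

variable {𝕜 E : Type*} [RCLike 𝕜] [NormedAddCommGroup E] [InnerProductSpace 𝕜 E]

theorem Filter.Tendsto.inner_comm {α : Type*} {l : Filter α} {u : α → E} {x y : E}
    (h : Tendsto (fun a => ⟪u a, y⟫_𝕜) l (𝓝 ⟪x, y⟫_𝕜)) :
    Tendsto (fun a => ⟪y, u a⟫_𝕜) l (𝓝 ⟪y, x⟫_𝕜) := by
  simpa only [Function.comp_def, inner_conj_symm] using (RCLike.continuous_conj.tendsto _).comp h

theorem isSelfAdjoint_of_tendsto_inner [CompleteSpace E] {α : Type*} {l : Filter α} [l.NeBot]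
    {T : α → E →L[𝕜] E} {O : E →L[𝕜] E} (hT : ∀ a x y, ⟪T a x, y⟫_𝕜 = ⟪x, T a y⟫_𝕜)
    (hO : ∀ x y, Tendsto (fun a => ⟪T a x, y⟫_𝕜) l (𝓝 ⟪O x, y⟫_𝕜)) : IsSelfAdjoint O := by
  refine ContinuousLinearMap.isSelfAdjoint_iff_isSymmetric.mpr fun x y => ?_
  refine tendsto_nhds_unique (hO x y) ?_
  simpa only [hT, ContinuousLinearMap.coe_coe] using (hO y x).inner_comm

theorem exists_inner_eq_of_tendsto_inner [CompleteSpace E] {α : Type*} {l : Filter α} [l.NeBot]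
    {T : α → E →L[𝕜] E} {C : ℝ} (hT : ∀ a, ‖T a‖ ≤ C) {L : E → E → 𝕜}
    (hL : ∀ x y, Tendsto (fun a => ⟪T a x, y⟫_𝕜) l (𝓝 (L x y))) :
    ∃ O : E →L[𝕜] E, ∀ x y, ⟪O x, y⟫_𝕜 = L x y := by
  let B : E →ₗ⋆[𝕜] E →ₗ[𝕜] 𝕜 := LinearMap.mk₂'ₛₗ _ _ L
    (fun x x' y => tendsto_nhds_unique (hL _ _) <| by
      simpa only [map_add, inner_add_left] using (hL x y).add (hL x' y))
    (fun c x y => tendsto_nhds_unique (hL _ _) <| by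
      simpa only [map_smul, inner_smul_left, smul_eq_mul] using (hL x y).const_mul _)
    (fun x y y' => tendsto_nhds_unique (hL _ _) <| by
      simpa only [inner_add_right] using (hL x y).add (hL x y'))
    (fun c x y => tendsto_nhds_unique (hL _ _) <| by
      simpa only [inner_smul_right, smul_eq_mul, RingHom.id_apply] using (hL x y).const_mul c)
  have hB : ∀ x y, ‖B x y‖ ≤ C * ‖x‖ * ‖y‖ := fun x y =>
    le_of_tendsto (hL x y).norm <| Eventually.of_forall fun a =>
      (norm_inner_le_norm _ _).trans <| by gcongr; exact (T a).le_of_opNorm_le (hT a) x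
  exact ⟨InnerProductSpace.continuousLinearMapOfBilin (B.mkContinuous₂ C hB), fun x y =>
    InnerProductSpace.continuousLinearMapOfBilin_apply _ x y⟩

theorem exists_tendsto_inner_of_cauchySeq [CompleteSpace E] {T : ℕ → E →L[𝕜] E} {C : ℝ}
    (hT : ∀ N, ‖T N‖ ≤ C) (hcauchy : ∀ x y, CauchySeq fun N => ⟪T N x, y⟫_𝕜) :
    ∃ O : E →L[𝕜] E, ∀ x y, Tendsto (fun N => ⟪T N x, y⟫_𝕜) atTop (𝓝 ⟪O x, y⟫_𝕜) := by
  choose L hL using fun x y => cauchySeq_tendsto_of_complete (hcauchy x y)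
  obtain ⟨O, hO⟩ := exists_inner_eq_of_tendsto_inner hT hL
  exact ⟨O, fun x y => hO x y ▸ hL x y⟩

theorem norm_inner_conj_sub_inner_le {A U : E →L[𝕜] E} (hA : ∀ x, ‖A x‖ ≤ ‖x‖)
    (hU : ∀ x, ‖U x‖ ≤ ‖x‖) (hUsymm : ∀ x y, ⟪U x, y⟫_𝕜 = ⟪x, U y⟫_𝕜) (x y : E) :
    ‖⟪U (A (U x)), y⟫_𝕜 - ⟪A x, y⟫_𝕜‖ ≤ ‖U x - x‖ * ‖y‖ + ‖x‖ * ‖U y - y‖ := by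
  have hsplit : ⟪U (A (U x)), y⟫_𝕜 - ⟪A x, y⟫_𝕜 = ⟪A (U x - x), U y⟫_𝕜 + ⟪A x, U y - y⟫_𝕜 := by
    rw [hUsymm, map_sub, inner_sub_left, inner_sub_right]; ring
  rw [hsplit]
  refine (norm_add_le _ _).trans (add_le_add ?_ ?_)
  · exact (norm_inner_le_norm _ _).trans (mul_le_mul (hA _) (hU _) (norm_nonneg _) (norm_nonneg _))
  · exact (norm_inner_le_norm _ _).trans (mul_le_mul_of_nonneg_right (hA _) (norm_nonneg _))

end WeakLimit

open Equiv

theorem swap_mem_stabSet {m a b : ℕ} (ha : m ≤ a) (hb : m ≤ b) : swap a b ∈ stabSet m :=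
  fun _ hi => swap_apply_of_ne_of_ne (by omega) (by omega)

theorem swap_eq_swap_mul_swap_mul_swap {k M N : ℕ} (hM : k ≠ M) (hN : k ≠ N) :
    swap k M = swap M N * swap k N * swap M N := by
  rw [swap_comm M N, swap_mul_swap_mul_swap hN hM, swap_comm]

theorem swap_mul_swap_eq_swap_mul_swap {k M N : ℕ} (hN : N ≠ k) (hMN : N ≠ M) :
    swap k N * swap k M = swap k M * swap N M := by
  rw [swap_comm N M, ← swap_mul_swap_mul_swap hN hMN, ← mul_assoc, ← mul_assoc, swap_mul_self,
    one_mul, swap_comm]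

section PermRep

variable {H : Type*} [NormedAddCommGroup H] [InnerProductSpace ℂ H]
  {K : Perm ℕ →* (H →L[ℂ] H)}

theorem inner_swap_apply_left (hunit : ∀ g (η : H), ‖K g η‖ = ‖η‖) (a b : ℕ) (x y : H) :
    ⟪K (swap a b) x, y⟫_ℂ = ⟪x, K (swap a b) y⟫_ℂ := by
  have hinv : K (swap a b) (K (swap a b) y) = y := by
    rw [← mul_apply_eq_comp, ← map_mul, swap_mul_self, map_one, one_apply_eq_self]
  conv_lhs => rw [← hinv]
  exact LinearIsometry.inner_map_map ⟨(K (swap a b)).toLinearMap, hunit _⟩ x _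

theorem tendsto_swap_apply_atTop
    (hcont : ∀ (η : H) (ε : ℝ), 0 < ε → ∃ k : ℕ, ∀ s ∈ stabSet k, ‖K s η - η‖ < ε) (η : H) :
    Tendsto (fun p : ℕ × ℕ => K (swap p.1 p.2) η) atTop (𝓝 η) := by
  refine Metric.tendsto_atTop.mpr fun ε hε => ?_
  obtain ⟨m, hm⟩ := hcont η ε hε
  refine ⟨(m, m), fun p hp => ?_⟩
  obtain ⟨h1, h2⟩ := Prod.mk_le_mk.mp hp
  rw [dist_eq_norm]
  exact hm _ (swap_mem_stabSet h1 h2)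

theorem cauchySeq_inner_swap_apply (hunit : ∀ g (η : H), ‖K g η‖ = ‖η‖)
    (hcont : ∀ (η : H) (ε : ℝ), 0 < ε → ∃ k : ℕ, ∀ s ∈ stabSet k, ‖K s η - η‖ < ε)
    (k : ℕ) (η ζ : H) : CauchySeq fun N => ⟪K (swap k N) η, ζ⟫_ℂ := by
  rw [cauchySeq_iff_tendsto_dist_atTop_0]
  have hbound : Tendsto (fun p : ℕ × ℕ => ‖K (swap p.1 p.2) η - η‖ * ‖ζ‖
      + ‖η‖ * ‖K (swap p.1 p.2) ζ - ζ‖) atTop (𝓝 0) := by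
    simpa using (((tendsto_swap_apply_atTop hcont η).sub_const η).norm.mul_const ‖ζ‖).add
      ((((tendsto_swap_apply_atTop hcont ζ).sub_const ζ).norm.const_mul ‖η‖))
  refine squeeze_zero' (Eventually.of_forall fun _ => dist_nonneg) ?_ hbound
  filter_upwards [eventually_ge_atTop (k + 1, k + 1)] with p hp
  have hk : k ≠ p.1 ∧ k ≠ p.2 := by
    obtain ⟨h1, h2⟩ := Prod.mk_le_mk.mp hp; omega
  rw [dist_eq_norm, swap_eq_swap_mul_swap_mul_swap hk.1 hk.2]
  simp only [map_mul, mul_apply_eq_comp]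
  exact norm_inner_conj_sub_inner_le (fun x => (hunit _ x).le) (fun x => (hunit _ x).le)
    (inner_swap_apply_left hunit _ _) η ζ

/-- The limit is taken along `atTop.curry atTop` (first `M = p.2`, then `N = p.1`) because
`(k N)(k M) = (k M)(N M)` fails on the diagonal `M = N`. -/
theorem tendsto_inner_swap_apply_sub_curry (hunit : ∀ g (η : H), ‖K g η‖ = ‖η‖)
    (hcont : ∀ (η : H) (ε : ℝ), 0 < ε → ∃ k : ℕ, ∀ s ∈ stabSet k, ‖K s η - η‖ < ε)
    (k : ℕ) (η ζ : H) :
    Tendsto (fun p : ℕ × ℕ => ⟪K (swap k p.2) η, K (swap k p.1) ζ⟫_ℂ - ⟪K (swap k p.2) η, ζ⟫_ℂ)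
      (atTop.curry atTop) (𝓝 0) := by
  have hbound : Tendsto (fun p : ℕ × ℕ => ‖K (swap p.1 p.2) η - η‖ * ‖ζ‖)
      (atTop.curry atTop) (𝓝 0) := by
    have h := ((tendsto_swap_apply_atTop hcont η).sub_const η).norm.mul_const ‖ζ‖
    rw [← prod_atTop_atTop_eq] at h
    simpa using h.mono_left curry_le_prod
  refine squeeze_zero_norm' ?_ hbound
  have hfar : ∀ᶠ p : ℕ × ℕ in atTop.curry atTop, k < p.1 ∧ p.1 < p.2 := by
    rw [eventually_curry_iff]
    filter_upwards [eventually_gt_atTop k] with N hN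
    filter_upwards [eventually_gt_atTop N] with M hM using ⟨hN, hM⟩
  filter_upwards [hfar] with p hp
  rw [← inner_swap_apply_left hunit, ← mul_apply_eq_comp, ← map_mul,
    swap_mul_swap_eq_swap_mul_swap (by omega) (by omega), map_mul, mul_apply_eq_comp,
    ← inner_sub_left, ← map_sub]
  exact (norm_inner_le_norm _ _).trans (mul_le_mul_of_nonneg_right (hunit _ _).le (norm_nonneg _))

theorem isIdempotentElem_of_tendsto_inner_swap (hunit : ∀ g (η : H), ‖K g η‖ = ‖η‖)
    (hcont : ∀ (η : H) (ε : ℝ), 0 < ε → ∃ k : ℕ, ∀ s ∈ stabSet k, ‖K s η - η‖ < ε)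
    {k : ℕ} {O : H →L[ℂ] H}
    (hO : ∀ η ζ, Tendsto (fun N => ⟪K (swap k N) η, ζ⟫_ℂ) atTop (𝓝 ⟪O η, ζ⟫_ℂ)) :
    IsIdempotentElem O := by
  refine ContinuousLinearMap.ext fun η => ext_inner_right ℂ fun ζ => ?_
  have hinner : ∀ N, Tendsto
      (fun M => ⟪K (swap k M) η, K (swap k N) ζ⟫_ℂ - ⟪K (swap k M) η, ζ⟫_ℂ) atTop
      (𝓝 (⟪K (swap k N) (O η), ζ⟫_ℂ - ⟪O η, ζ⟫_ℂ)) := fun N => by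
    simpa only [inner_swap_apply_left hunit] using (hO η (K (swap k N) ζ)).sub (hO η ζ)
  have hzero := tendsto_of_tendsto_curry
    (tendsto_inner_swap_apply_sub_curry hunit hcont k η ζ) hinner
  rw [mul_apply_eq_comp, ← sub_eq_zero]
  exact tendsto_nhds_unique ((hO (O η) ζ).sub_const _) hzero

end PermRep

/-- for each `k`, the operators `K((k,N))` (images of transpositions)
converge in the weak operator topology, as `N → ∞`, to a self-adjoint orthogonal
projection `O_k`. -/
theorem statement5
    {H : Type*} [NormedAddCommGroup H] [InnerProductSpace ℂ H] [CompleteSpace H]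
    (K : Equiv.Perm ℕ →* (H →L[ℂ] H))
    (hunit : ∀ g (η : H), ‖K g η‖ = ‖η‖)
    (hcont : ∀ (η : H) (ε : ℝ), 0 < ε → ∃ k : ℕ, ∀ s ∈ stabSet k, ‖K s η - η‖ < ε)
    (k : ℕ) :
    ∃ O : H →L[ℂ] H, IsSelfAdjoint O ∧ O.comp O = O ∧
      ∀ η ζ : H, Tendsto (fun N => ⟪K (Equiv.swap k N) η, ζ⟫_ℂ) atTop (𝓝 ⟪O η, ζ⟫_ℂ) := by
  have hcontraction : ∀ g, ‖K g‖ ≤ 1 := fun g =>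
    ContinuousLinearMap.opNorm_le_bound _ zero_le_one fun η => by rw [hunit, one_mul]
  obtain ⟨O, hO⟩ := exists_tendsto_inner_of_cauchySeq (fun N => hcontraction (swap k N))
    (cauchySeq_inner_swap_apply hunit hcont k)
  exact ⟨O, isSelfAdjoint_of_tendsto_inner (fun N => inner_swap_apply_left hunit k N) hO,
    (isIdempotentElem_of_tendsto_inner_swap hunit hcont hO).eq, hO⟩
end

section
/- With P_n and O_n as above, the identity O_n P_n = P_{n-1} holds; i.e., the projection onto vectors fixed by the group generated by (n, n+1)-conjugates, namely S(n,n,∞)-fixed vectors, coincides with the projection onto S(n−1,∞)-fixed vectors. -/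
/-!
Write `n = p + 1`. The permutation `σ_{m+1}^p` is conjugate to `(p, p+1+2m) · σ_m^{p+1}` by the
cycle `(p+1+m … p+1+2m)`, and for `N > p+1+2m` the latter is conjugate to `(p, N) · σ_m^{p+1}`
by `(p+1+2m, N)`; both conjugators lie in `stabSet m`. For a unitary representation,
conjugating by `c` moves a matrix coefficient `⟪K g η, ζ⟫` by at most
`‖K c⁻¹ η - η‖ ‖ζ‖ + ‖η‖ ‖K c⁻¹ ζ - ζ‖`, uniformly in `g`, and continuity makes this small for
`c ∈ stabSet m` with `m` large.
Letting `N → ∞` and then `m → ∞` yields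
`⟪P' η, ζ⟫ = lim_m ⟪O K(σ_m^{p+1}) η, ζ⟫ = ⟪O P η, ζ⟫`.
-/

open MeasureTheory Filter Topology
open scoped InnerProductSpace

namespace PermNatRep

open Equiv

lemma prod_map_swap_range_apply (n m : ℕ) {k : ℕ} (hk : k ≤ m) (x : ℕ) :
    ((List.range k).map fun j => swap (n + j) (n + m + j)).prod x =
      if n ≤ x ∧ x < n + k then x + m
      else if n + m ≤ x ∧ x < n + m + k then x - m else x := by
  induction k generalizing x with
  | zero =>
    simp only [List.range_zero, List.map_nil, List.prod_nil, Perm.coe_one, id_eq]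
    split_ifs <;> omega
  | succ k ih =>
    rw [List.range_succ, List.map_append, List.prod_append, List.map_singleton,
      List.prod_singleton, Perm.mul_apply, ih (by omega)]
    simp only [swap_apply_def]
    split_ifs <;> omega

lemma sigmaPerm_apply (n m x : ℕ) :
    sigmaPerm n m x =
      if n ≤ x ∧ x < n + m then x + m
      else if n + m ≤ x ∧ x < n + m + m then x - m else x :=
  prod_map_swap_range_apply n m le_rfl x

def cycleIcc (a m : ℕ) : Perm ℕ :=
  ((List.range m).map fun j => swap (a + j) (a + j + 1)).prod

lemma cycleIcc_apply (a m x : ℕ) :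
    cycleIcc a m x = if a ≤ x ∧ x < a + m then x + 1 else if x = a + m then a else x := by
  induction m generalizing x with
  | zero =>
    simp only [cycleIcc, List.range_zero, List.map_nil, List.prod_nil, Perm.coe_one, id_eq]
    split_ifs <;> omega
  | succ m ih =>
    rw [cycleIcc, List.range_succ, List.map_append, List.prod_append, List.map_singleton,
      List.prod_singleton, Perm.mul_apply, ← cycleIcc, ih]
    simp only [swap_apply_def]
    split_ifs <;> omega

lemma sigmaPerm_succ_eq_conj (p m : ℕ) :
    sigmaPerm p (m + 1) =
      cycleIcc (p + 1 + m) m * (swap p (p + 1 + 2 * m) * sigmaPerm (p + 1) m) *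
        (cycleIcc (p + 1 + m) m)⁻¹ := by
  rw [eq_mul_inv_iff_mul_eq]
  ext x
  simp only [Perm.mul_apply, sigmaPerm_apply, cycleIcc_apply, swap_apply_def]
  split_ifs <;> omega

lemma swap_conj_swap_mul_sigmaPerm {p m N : ℕ} (hN : p + 1 + 2 * m < N) :
    swap (p + 1 + 2 * m) N * (swap p (p + 1 + 2 * m) * sigmaPerm (p + 1) m) *
        (swap (p + 1 + 2 * m) N)⁻¹ =
      swap p N * sigmaPerm (p + 1) m := by
  have hdisj : (swap (p + 1 + 2 * m) N).Disjoint (sigmaPerm (p + 1) m) := by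
    intro x
    rw [sigmaPerm_apply, swap_apply_def]
    split_ifs <;> omega
  rw [← mul_assoc, mul_assoc, ← hdisj.commute.inv_left.eq, ← mul_assoc, ← swap_apply_apply,
    swap_apply_of_ne_of_ne (by omega) (by omega), swap_apply_left]

lemma stabSet_antitone : Antitone stabSet :=
  fun _ _ hjk _ hs i hi => hs i (lt_of_lt_of_le hi hjk)

lemma inv_mem_stabSet {k : ℕ} {c : Perm ℕ} (hc : c ∈ stabSet k) : c⁻¹ ∈ stabSet k :=
  fun i hi => by rw [Perm.inv_eq_iff_eq, hc i hi]

lemma cycleIcc_mem_stabSet {a k : ℕ} (m : ℕ) (hk : k ≤ a) : cycleIcc a m ∈ stabSet k := by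
  intro i hi
  rw [cycleIcc_apply]
  split_ifs <;> omega

lemma swap_mem_stabSet {a b k : ℕ} (ha : k ≤ a) (hb : k ≤ b) : swap a b ∈ stabSet k :=
  fun _ hi => swap_apply_of_ne_of_ne (by omega) (by omega)

section UnitaryRepresentation

variable {𝕜 E G : Type*} [RCLike 𝕜] [NormedAddCommGroup E] [InnerProductSpace 𝕜 E] [Group G]
  {K : G →* E →L[𝕜] E}

lemma apply_apply_inv (g : G) (x : E) : K g (K g⁻¹ x) = x := by
  rw [← mul_apply_eq_comp, ← map_mul, mul_inv_cancel, map_one, one_apply_eq_self]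

lemma inner_apply_apply (hK : ∀ g (x : E), ‖K g x‖ = ‖x‖) (g : G) (x y : E) :
    ⟪K g x, K g y⟫_𝕜 = ⟪x, y⟫_𝕜 :=
  (⟨(K g).toLinearMap, hK g⟩ : E →ₗᵢ[𝕜] E).inner_map_map x y

lemma norm_inner_conj_sub_inner_le (hK : ∀ g (x : E), ‖K g x‖ = ‖x‖) (c g : G) (x y : E) :
    ‖⟪K (c * g * c⁻¹) x, y⟫_𝕜 - ⟪K g x, y⟫_𝕜‖ ≤
      ‖K c⁻¹ x - x‖ * ‖y‖ + ‖x‖ * ‖K c⁻¹ y - y‖ := by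
  have hconj : ⟪K (c * g * c⁻¹) x, y⟫_𝕜 = ⟪K g (K c⁻¹ x), K c⁻¹ y⟫_𝕜 := by
    calc ⟪K (c * g * c⁻¹) x, y⟫_𝕜
        = ⟪K c (K g (K c⁻¹ x)), K c (K c⁻¹ y)⟫_𝕜 := by
          rw [apply_apply_inv, map_mul, map_mul, mul_apply_eq_comp, mul_apply_eq_comp]
      _ = ⟪K g (K c⁻¹ x), K c⁻¹ y⟫_𝕜 := inner_apply_apply hK _ _ _
  have hsplit : ⟪K g (K c⁻¹ x), K c⁻¹ y⟫_𝕜 - ⟪K g x, y⟫_𝕜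
      = ⟪K g (K c⁻¹ x - x), K c⁻¹ y⟫_𝕜 + ⟪K g x, K c⁻¹ y - y⟫_𝕜 := by
    simp only [map_sub, inner_sub_left, inner_sub_right]
    ring
  rw [hconj, hsplit]
  refine (norm_add_le _ _).trans (add_le_add ?_ ?_)
  · exact (norm_inner_le_norm _ _).trans_eq (by rw [hK, hK])
  · exact (norm_inner_le_norm _ _).trans_eq (by rw [hK])

end UnitaryRepresentation

section PermRepresentation

variable {𝕜 E : Type*} [RCLike 𝕜] [NormedAddCommGroup E] [InnerProductSpace 𝕜 E]
  {K : Perm ℕ →* E →L[𝕜] E}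

lemma exists_forall_stabSet_norm_inner_conj_sub_inner_le
    (hK : ∀ g (x : E), ‖K g x‖ = ‖x‖)
    (hcont : ∀ (x : E) (ε : ℝ), 0 < ε → ∃ k : ℕ, ∀ s ∈ stabSet k, ‖K s x - x‖ < ε)
    (x y : E) {ε : ℝ} (hε : 0 < ε) :
    ∃ k, ∀ c ∈ stabSet k, ∀ g, ‖⟪K (c * g * c⁻¹) x, y⟫_𝕜 - ⟪K g x, y⟫_𝕜‖ ≤ ε := by
  set δ := ε / (‖x‖ + ‖y‖ + 1)
  have hδ : 0 < δ := by positivity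
  obtain ⟨k₁, hk₁⟩ := hcont x δ hδ
  obtain ⟨k₂, hk₂⟩ := hcont y δ hδ
  refine ⟨max k₁ k₂, fun c hc g => (norm_inner_conj_sub_inner_le hK c g x y).trans ?_⟩
  have hc₁ := hk₁ _ (inv_mem_stabSet (stabSet_antitone (le_max_left _ _) hc))
  have hc₂ := hk₂ _ (inv_mem_stabSet (stabSet_antitone (le_max_right _ _) hc))
  calc ‖K c⁻¹ x - x‖ * ‖y‖ + ‖x‖ * ‖K c⁻¹ y - y‖ ≤ δ * ‖y‖ + ‖x‖ * δ := by gcongr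
    _ ≤ δ * (‖x‖ + ‖y‖ + 1) := by nlinarith
    _ = ε := div_mul_cancel₀ _ (by positivity)

lemma tendsto_inner_sigmaPerm_succ_sub_inner_apply (hK : ∀ g (x : E), ‖K g x‖ = ‖x‖)
    (hcont : ∀ (x : E) (ε : ℝ), 0 < ε → ∃ k : ℕ, ∀ s ∈ stabSet k, ‖K s x - x‖ < ε)
    {p : ℕ} {O : E →L[𝕜] E}
    (hO : ∀ x y : E, Tendsto (fun N => ⟪K (swap p N) x, y⟫_𝕜) atTop (𝓝 ⟪O x, y⟫_𝕜))
    (x y : E) :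
    Tendsto (fun m =>
        ⟪K (sigmaPerm p (m + 1)) x, y⟫_𝕜 - ⟪O (K (sigmaPerm (p + 1) m) x), y⟫_𝕜)
      atTop (𝓝 0) := by
  refine NormedAddGroup.tendsto_nhds_zero.2 fun ε hε => ?_
  obtain ⟨k, hk⟩ := exists_forall_stabSet_norm_inner_conj_sub_inner_le hK hcont x y
    (by positivity : 0 < ε / 3)
  filter_upwards [eventually_ge_atTop k] with m hm
  set τ := swap p (p + 1 + 2 * m) * sigmaPerm (p + 1) m
  have hσ : ‖⟪K (sigmaPerm p (m + 1)) x, y⟫_𝕜 - ⟪K τ x, y⟫_𝕜‖ ≤ ε / 3 := by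
    rw [sigmaPerm_succ_eq_conj]
    exact hk _ (cycleIcc_mem_stabSet m (by omega)) τ
  have hOτ : ‖⟪O (K (sigmaPerm (p + 1) m) x), y⟫_𝕜 - ⟪K τ x, y⟫_𝕜‖ ≤ ε / 3 := by
    refine le_of_tendsto ((hO _ y).sub_const _).norm ?_
    filter_upwards [eventually_gt_atTop (p + 1 + 2 * m)] with N hN
    rw [← mul_apply_eq_comp, ← map_mul, ← swap_conj_swap_mul_sigmaPerm hN]
    exact hk _ (swap_mem_stabSet (by omega) (by omega)) τ
  refine (norm_sub_le_norm_sub_add_norm_sub _ (⟪K τ x, y⟫_𝕜) _).trans_lt ?_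
  rw [norm_sub_rev (⟪K τ x, y⟫_𝕜)]
  linarith

end PermRepresentation

end PermNatRep

open PermNatRep

/-- `O_n · P_n = P_{n-1}`: the product of the projection `P_n` onto the
`S(n,∞)`-fixed vectors with `O_n = weak-lim_N K((n,N))` (in 0-based indexing the point
`n` of the paper is the index `n-1`) equals the projection onto the
`S(n-1,∞)`-fixed vectors. -/
theorem statement8
    {H : Type*} [NormedAddCommGroup H] [InnerProductSpace ℂ H] [CompleteSpace H]
    (K : Equiv.Perm ℕ →* (H →L[ℂ] H))
    (hunit : ∀ g (η : H), ‖K g η‖ = ‖η‖)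
    (hcont : ∀ (η : H) (ε : ℝ), 0 < ε → ∃ k : ℕ, ∀ s ∈ stabSet k, ‖K s η - η‖ < ε)
    (n : ℕ) (hn : 1 ≤ n) (P P' O : H →L[ℂ] H)
    (hP : ∀ η ζ : H, Tendsto (fun m => ⟪K (sigmaPerm n m) η, ζ⟫_ℂ) atTop (𝓝 ⟪P η, ζ⟫_ℂ))
    (hP' : ∀ η ζ : H,
      Tendsto (fun m => ⟪K (sigmaPerm (n - 1) m) η, ζ⟫_ℂ) atTop (𝓝 ⟪P' η, ζ⟫_ℂ))
    (hO : ∀ η ζ : H,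
      Tendsto (fun N => ⟪K (Equiv.swap (n - 1) N) η, ζ⟫_ℂ) atTop (𝓝 ⟪O η, ζ⟫_ℂ)) :
    O.comp P = P' := by
  obtain ⟨p, rfl⟩ : ∃ p, n = p + 1 := ⟨n - 1, by omega⟩
  rw [Nat.add_sub_cancel] at hP' hO
  ext η
  refine ext_inner_right ℂ fun ζ =>
    tendsto_nhds_unique ?_ ((hP' η ζ).comp (tendsto_add_atTop_nat 1))
  have hOP : Tendsto (fun m => ⟪O (K (sigmaPerm (p + 1) m) η), ζ⟫_ℂ) atTop
      (𝓝 ⟪O (P η), ζ⟫_ℂ) := by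
    simpa only [← O.adjoint_inner_right] using hP η (O.adjoint ζ)
  simpa [Function.comp_def] using
    (tendsto_inner_sigmaPerm_succ_sub_inner_apply hunit hcont hO η ζ).add hOP
end

section
/- For a continuous unitary representation K of S̄∞ on a Hilbert space H, the projections P_k converge strongly to the identity operator as k → ∞: for each η ∈ H, ‖P_k η − η‖ → 0. -/
/-!
Fix `η` and `ε > 0`. Continuity gives `k` with `‖K s η - η‖ ≤ ε / 2` for `s ∈ S(k,∞)`, hence for
`s ∈ S(n,∞)` whenever `n ≥ k`. The closed convex hull `C` of the orbit `S(n,∞) η` lies in the closed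
ball of radius `ε / 2` about `η` and is mapped into itself by the isometries `K s`, `s ∈ S(n,∞)`.
In a Hilbert space `C` has a unique point of minimal norm, so that point is `S(n,∞)`-fixed, i.e.
lies in the range of `P n`. As `P n` is the orthogonal projection onto its range,
`‖P n η - η‖ ≤ ε / 2`.
-/

open MeasureTheory Filter Topology
open scoped InnerProductSpace

open Set Function Metric

theorem Convex.eq_of_isMinOn_norm {E : Type*} [NormedAddCommGroup E] [NormedSpace ℝ E]
    [StrictConvexSpace ℝ E] {C : Set E} (hC : Convex ℝ C) {v w : E} (hv : v ∈ C) (hw : w ∈ C)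
    (hmin : IsMinOn (‖·‖) C v) (hnorm : ‖w‖ = ‖v‖) : w = v := by
  by_contra hne
  have hmid : (1 / 2 : ℝ) • (w + v) ∈ C := by
    rw [smul_add]; exact hC hw hv (by norm_num) (by norm_num) (by norm_num)
  exact ((norm_midpoint_lt_iff hnorm).2 hne).not_ge (hnorm ▸ isMinOn_iff.1 hmin _ hmid)

theorem IsClosed.exists_isMinOn_norm {E : Type*} [NormedAddCommGroup E] [InnerProductSpace ℝ E]
    [CompleteSpace E] {C : Set E} (hclosed : IsClosed C) (hconv : Convex ℝ C) (hne : C.Nonempty) :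
    ∃ v ∈ C, IsMinOn (‖·‖ : E → ℝ) C v := by
  obtain ⟨v, hv, hinf⟩ := exists_norm_eq_iInf_of_complete_convex hne hclosed.isComplete hconv 0
  refine ⟨v, hv, isMinOn_iff.2 fun x hx => ?_⟩
  simp only [zero_sub, norm_neg] at hinf
  exact hinf ▸ ciInf_le ⟨0, forall_mem_range.2 fun _ => norm_nonneg _⟩ (⟨x, hx⟩ : C)

theorem IsClosed.exists_isFixedPt_of_mapsTo_of_norm_le {E ι : Type*} [NormedAddCommGroup E]
    [InnerProductSpace ℝ E] [CompleteSpace E] {C : Set E} (hclosed : IsClosed C)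
    (hconv : Convex ℝ C) (hne : C.Nonempty) (f : ι → E → E) (hnorm : ∀ i x, ‖f i x‖ ≤ ‖x‖)
    (hmaps : ∀ i, MapsTo (f i) C C) : ∃ v ∈ C, ∀ i, IsFixedPt (f i) v := by
  obtain ⟨v, hv, hmin⟩ := hclosed.exists_isMinOn_norm hconv hne
  refine ⟨v, hv, fun i => hconv.eq_of_isMinOn_norm hv (hmaps i hv) hmin ?_⟩
  exact (hnorm i v).antisymm (isMinOn_iff.1 hmin _ (hmaps i hv))

theorem ContinuousLinearMap.mapsTo_closedConvexHull {𝕜 E F : Type*} [Field 𝕜] [LinearOrder 𝕜]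
    [IsStrictOrderedRing 𝕜] [AddCommGroup E] [Module 𝕜 E] [TopologicalSpace E]
    [AddCommGroup F] [Module 𝕜 F] [TopologicalSpace F] (L : E →L[𝕜] F) {s : Set E} {t : Set F}
    (h : MapsTo L s (closedConvexHull 𝕜 t)) :
    MapsTo L (closedConvexHull 𝕜 s) (closedConvexHull 𝕜 t) :=
  closedConvexHull_min h (convex_closedConvexHull.linear_preimage L.toLinearMap)
    (isClosed_closedConvexHull.preimage L.continuous)

theorem exists_invariant_near_of_forall_norm_sub_le {G H : Type*} [Monoid G] [NormedAddCommGroup H]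
    [InnerProductSpace ℂ H] [CompleteSpace H] (K : G →* (H →L[ℂ] H))
    (hK : ∀ g (x : H), ‖K g x‖ ≤ ‖x‖) (S : Submonoid G) {η : H} {r : ℝ}
    (hη : ∀ s ∈ S, ‖K s η - η‖ ≤ r) : ∃ v, (∀ s ∈ S, K s v = v) ∧ ‖v - η‖ ≤ r := by
  let _ : InnerProductSpace ℝ H := .complexToReal
  set C := closedConvexHull ℝ ((fun s => K s η) '' S)
  have hmaps (s : S) : MapsTo (K s) C C := by
    refine ((K s).restrictScalars ℝ).mapsTo_closedConvexHull ?_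
    rintro _ ⟨t, ht, rfl⟩
    exact subset_closedConvexHull ⟨s * t, S.mul_mem s.2 ht, by simp⟩
  have hηC : η ∈ C := subset_closedConvexHull ⟨1, S.one_mem, by simp⟩
  obtain ⟨v, hvC, hfix⟩ := isClosed_closedConvexHull.exists_isFixedPt_of_mapsTo_of_norm_le
    convex_closedConvexHull ⟨η, hηC⟩ (fun s : S => K s) (fun s => hK s) hmaps
  have hCball : C ⊆ closedBall η r := by
    refine closedConvexHull_min ?_ (convex_closedBall η r) isClosed_closedBall
    rintro _ ⟨s, hs, rfl⟩
    simpa [dist_eq_norm] using hη s hs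
  exact ⟨v, fun s hs => hfix ⟨s, hs⟩, by simpa [dist_eq_norm] using hCball hvC⟩

theorem IsStarProjection.norm_sub_apply_le {𝕜 E : Type*} [RCLike 𝕜] [NormedAddCommGroup E]
    [InnerProductSpace 𝕜 E] [CompleteSpace E] {P : E →L[𝕜] E} (hP : IsStarProjection P) (x : E)
    {v : E} (hv : v ∈ range P) : ‖x - P x‖ ≤ ‖x - v‖ := by
  obtain ⟨_, hPeq⟩ := isStarProjection_iff_eq_starProjection_range.1 hP
  rw [DFunLike.congr_fun hPeq x, Submodule.starProjection_minimal]
  exact ciInf_le ⟨0, forall_mem_range.2 fun _ => norm_nonneg _⟩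
    (⟨v, LinearMap.mem_range.2 hv⟩ : LinearMap.range (P : E →ₗ[𝕜] E))

theorem mem_fixingSubgroup_Iio_iff {n : ℕ} {s : Equiv.Perm ℕ} :
    s ∈ fixingSubgroup (Equiv.Perm ℕ) (Iio n) ↔ s ∈ stabSet n := by
  simp [mem_fixingSubgroup_iff, stabSet]

theorem stabSet_antitone : Antitone stabSet :=
  fun _ _ hkn _ hs i hi => hs i (hi.trans_le hkn)

/-- the projections `P_k` onto the `S(k,∞)`-fixed vectors converge
strongly to the identity operator. -/
theorem statement10
    {H : Type*} [NormedAddCommGroup H] [InnerProductSpace ℂ H] [CompleteSpace H]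
    (K : Equiv.Perm ℕ →* (H →L[ℂ] H))
    (hunit : ∀ g (η : H), ‖K g η‖ = ‖η‖)
    (hcont : ∀ (η : H) (ε : ℝ), 0 < ε → ∃ k : ℕ, ∀ s ∈ stabSet k, ‖K s η - η‖ < ε)
    (P : ℕ → (H →L[ℂ] H))
    (hsa : ∀ k, IsSelfAdjoint (P k)) (hidem : ∀ k, (P k).comp (P k) = P k)
    (hrange : ∀ k, Set.range (P k) = {η : H | ∀ s ∈ stabSet k, K s η = η}) :
    ∀ η : H, Tendsto (fun k => ‖P k η - η‖) atTop (𝓝 0) := by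
  intro η
  rw [Metric.tendsto_atTop]
  intro ε hε
  obtain ⟨k, hk⟩ := hcont η (ε / 2) (half_pos hε)
  refine ⟨k, fun n hn => ?_⟩
  obtain ⟨v, hfix, hvη⟩ := exists_invariant_near_of_forall_norm_sub_le K (fun g x => (hunit g x).le)
    (fixingSubgroup (Equiv.Perm ℕ) (Iio n)).toSubmonoid
    fun s hs => (hk s (stabSet_antitone hn (mem_fixingSubgroup_Iio_iff.1 hs))).le
  have hv : v ∈ Set.range (P n) := by
    rw [hrange n]
    exact fun s hs => hfix s (mem_fixingSubgroup_Iio_iff.2 hs)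
  calc dist ‖P n η - η‖ 0 = ‖η - P n η‖ := by simp [norm_sub_rev]
    _ ≤ ‖η - v‖ := IsStarProjection.norm_sub_apply_le ⟨hidem n, hsa n⟩ η hv
    _ ≤ ε / 2 := by rwa [norm_sub_rev]
    _ < ε := half_lt_self hε
end

section
/- Let G be a group, H ≤ G a subgroup, and suppose G acts on the right on a measure space X. Let E ⊆ X be measurable with μ(E Δ Es) = 0 for all s ∈ H and μ((Eg) ∩ E) = 0 for all g ∉ H, and let μ_E be a finite H-invariant measure supported on E. Choose representatives r(z) ∈ G for each right coset z ∈ H\G (countably many). Then the measure ν(Y) = Σ_{z ∈ H\G} μ_E((Y ∩ E·r(z))·r(z)⁻¹) defined on A = ∪_z E·r(z) is G-invariant: ν(Yg) = ν(Y) for all g ∈ G and measurable Y ⊆ A. -/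
/-!
Writing `z·g` for the coset `H r(z) g`, the element `s = r(z) g r(z·g)⁻¹` lies in `H` and
`g r(z·g)⁻¹ = r(z)⁻¹ s`. Hence the `z·g`-th term of `ν(Yg)` is `μ_E(Y r(z)⁻¹ s ∩ E)`, which
by `H`-invariance (`E s = E` a.e. and `μ_E` is `s`-invariant on `E`) equals the `z`-th term
of `ν(Y)`. Since `z ↦ z·g` permutes `H\G`, the two sums agree.
-/

open MeasureTheory Filter
open scoped symmDiff

namespace MeasureTheory

lemma measure_image_inter_eq_of_symmDiff_null {X : Type*} [MeasurableSpace X] {μ : Measure X}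
    {e : X ≃ᵐ X} {E Z : Set X} (hE : MeasurableSet E) (hZ : MeasurableSet Z)
    (hfix : μ (E ∆ (e '' E)) = 0)
    (hinv : ∀ Y : Set X, MeasurableSet Y → Y ⊆ E → μ (e '' Y) = μ Y) :
    μ (e '' Z ∩ E) = μ (Z ∩ E) := by
  have hEe : E =ᵐ[μ] e '' E := measure_symmDiff_eq_zero_iff.mp hfix
  calc μ (e '' Z ∩ E) = μ (e '' Z ∩ e '' E) := measure_congr (EventuallyEq.rfl.inter hEe)
    _ = μ (e '' (Z ∩ E)) := by rw [Set.image_inter e.injective]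
    _ = μ (Z ∩ E) := hinv _ (hZ.inter hE) Set.inter_subset_right

end MeasureTheory

namespace QuotientGroup

variable {G : Type*} [Group G] (H : Subgroup G)

def rightCosetMulRight (g : G) : Quotient (rightRel H) ≃ Quotient (rightRel H) :=
  Quotient.congr (Equiv.mulRight g) fun a b => by
    simp only [rightRel_apply, Equiv.coe_mulRight, mul_inv_rev, mul_assoc, mul_inv_cancel_left]

@[simp]
lemma rightCosetMulRight_mk (g a : G) :
    rightCosetMulRight H g (Quotient.mk (rightRel H) a) = Quotient.mk (rightRel H) (a * g) :=
  rfl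

lemma section_mul_mul_inv_section_mem {r : Quotient (rightRel H) → G}
    (hr : ∀ z, Quotient.mk (rightRel H) (r z) = z) (z : Quotient (rightRel H)) (g : G) :
    r z * g * (r (rightCosetMulRight H g z))⁻¹ ∈ H := by
  have hz : rightCosetMulRight H g z = Quotient.mk (rightRel H) (r z * g) := by
    rw [← rightCosetMulRight_mk, hr]
  have hrel : rightRel H (r z * g) (r (rightCosetMulRight H g z)) :=
    Quotient.exact (by rw [hr, hz])
  simpa using H.inv_mem (rightRel_apply.mp hrel)

end QuotientGroup

section RightAction

variable {X G : Type*} [MeasurableSpace X] [Group G] {T : G → X ≃ᵐ X}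

lemma image_image_eq_image_mul (hTmul : ∀ g h : G, T (g * h) = (T g).trans (T h))
    (a b : G) (S : Set X) : T b '' (T a '' S) = T (a * b) '' S := by
  rw [hTmul, MeasurableEquiv.coe_trans, Set.image_comp]

lemma image_inv_inter_image (hT1 : T 1 = MeasurableEquiv.refl X)
    (hTmul : ∀ g h : G, T (g * h) = (T g).trans (T h)) (g : G) (S E : Set X) :
    T g⁻¹ '' (S ∩ T g '' E) = T g⁻¹ '' S ∩ E := by
  rw [Set.image_inter (T g⁻¹).injective, image_image_eq_image_mul hTmul, mul_inv_cancel, hT1]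
  simp

end RightAction

theorem statement16_general
    {X : Type*} [MeasurableSpace X]
    {G : Type*} [Group G] (H : Subgroup G)
    (T : G → X ≃ᵐ X)
    (hT1 : T 1 = MeasurableEquiv.refl X)
    (hTmul : ∀ g h : G, T (g * h) = (T g).trans (T h))
    (E : Set X) (hE : MeasurableSet E)
    (μE : MeasureTheory.Measure X)
    (hEfix : ∀ s ∈ H, μE (E ∆ (T s '' E)) = 0)
    (hinv : ∀ s ∈ H, ∀ Y : Set X, MeasurableSet Y → Y ⊆ E → μE (T s '' Y) = μE Y)
    (r : Quotient (QuotientGroup.rightRel H) → G)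
    (hr : ∀ z, Quotient.mk (QuotientGroup.rightRel H) (r z) = z) :
    ∀ g : G, ∀ Y : Set X, MeasurableSet Y → Y ⊆ ⋃ z, T (r z) '' E →
      (∑' z, μE (T (r z)⁻¹ '' ((T g '' Y) ∩ (T (r z) '' E)))) =
        ∑' z, μE (T (r z)⁻¹ '' (Y ∩ (T (r z) '' E))) := by
  intro g Y hY _
  have hterm (z) : μE (T (r (QuotientGroup.rightCosetMulRight H g z))⁻¹ ''
      (T g '' Y ∩ T (r (QuotientGroup.rightCosetMulRight H g z)) '' E)) =
        μE (T (r z)⁻¹ '' (Y ∩ T (r z) '' E)) := by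
    obtain ⟨s, hs, hgs⟩ :
        ∃ s ∈ H, g * (r (QuotientGroup.rightCosetMulRight H g z))⁻¹ = (r z)⁻¹ * s :=
      ⟨_, QuotientGroup.section_mul_mul_inv_section_mem H hr z g, by group⟩
    rw [image_inv_inter_image hT1 hTmul, image_inv_inter_image hT1 hTmul,
      image_image_eq_image_mul hTmul, hgs, ← image_image_eq_image_mul hTmul,
      measure_image_inter_eq_of_symmDiff_null hE ((T _).measurableSet_image.mpr hY)
        (hEfix s hs) (hinv s hs)]
  rw [← (QuotientGroup.rightCosetMulRight H g).tsum_eq]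
  exact tsum_congr hterm

/-- extension of a finite `H`-invariant measure on `E` to a `G`-invariant
measure on `A = ⋃_z E·r(z)`, where `r` is a section of the right cosets `H\G` and the
translates of `E` by elements outside `H` are `μ_E`-almost disjoint from `E`. The extension
`ν(Y) = Σ_z μ_E((Y ∩ E·r(z))·r(z)⁻¹)` satisfies `ν(Yg) = ν(Y)`. -/
theorem statement16
    {X : Type*} [MeasurableSpace X]
    {G : Type*} [Group G] (H : Subgroup G)
    [Countable (Quotient (QuotientGroup.rightRel H))]
    (T : G → X ≃ᵐ X)
    (hT1 : T 1 = MeasurableEquiv.refl X)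
    (hTmul : ∀ g h : G, T (g * h) = (T g).trans (T h))
    (E : Set X) (hE : MeasurableSet E)
    (μE : MeasureTheory.Measure X) [MeasureTheory.IsFiniteMeasure μE]
    (hsupp : μE Eᶜ = 0)
    (hEfix : ∀ s ∈ H, μE (E ∆ (T s '' E)) = 0)
    (hdisj : ∀ g ∉ H, μE ((T g '' E) ∩ E) = 0)
    (hinv : ∀ s ∈ H, ∀ Y : Set X, MeasurableSet Y → Y ⊆ E → μE (T s '' Y) = μE Y)
    (r : Quotient (QuotientGroup.rightRel H) → G)
    (hr : ∀ z, Quotient.mk (QuotientGroup.rightRel H) (r z) = z)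
    (hr1 : r (Quotient.mk (QuotientGroup.rightRel H) 1) = 1) :
    ∀ g : G, ∀ Y : Set X, MeasurableSet Y → Y ⊆ ⋃ z, T (r z) '' E →
      (∑' z, μE (T (r z)⁻¹ '' ((T g '' Y) ∩ (T (r z) '' E)))) =
        ∑' z, μE (T (r z)⁻¹ '' (Y ∩ (T (r z) '' E))) :=
  statement16_general H T hT1 hTmul E hE μE hEfix hinv r hr
end
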